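/- arXiv:math/0409268 — 2 statements merged into one kernel-verified Lean document; each statement's English description precedes it below -/
import Mathlib

section
/- Let γ be the standard Gaussian measure on ℝⁿ, let L : ℝⁿ → ℝ be a nonnegative measurable function with ∫ L dγ = 1 and ∫ L(x)·‖x‖² dγ(x) < ∞, and let φ : ℝⁿ → ℝ be a C² function whose gradient and Hessian have at most polynomial growth. Assume the pushforward of γ under T(x) = x + ∇φ(x) equals the measure L·γ. Then for every h ∈ ℝⁿ, ∫ L(x)·(⟨x,h⟩² − ‖h‖²) dγ(x) = ∫ ⟨∇φ(x), h⟩² dγ(x) + 2·∫ ⟨Hess φ(x) h, h⟩ dγ(x). (This is the second-order identity E[∇²L] = E[∇φ⊗∇φ] + 2E[∇²φ] from the proof of Theorem 1, written on the target-measure side.) -/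
open MeasureTheory Real
open scoped RealInnerProductSpace ENNReal

/-- The standard Gaussian measure on `ℝⁿ` (identity covariance, mean zero). -/
noncomputable def stdGaussian (n : ℕ) : Measure (EuclideanSpace ℝ (Fin n)) :=
  (volume : Measure (EuclideanSpace ℝ (Fin n))).withDensity
    (fun x => ENNReal.ofReal ((2 * π) ^ (-(n : ℝ) / 2) * Real.exp (-‖x‖ ^ 2 / 2)))

/-- A function has at most polynomial growth. -/
def PolyGrowth {E F : Type*} [NormedAddCommGroup E] [NormedAddCommGroup F]
    (g : E → F) : Prop :=
  ∃ C > (0 : ℝ), ∃ k : ℕ, ∀ x, ‖g x‖ ≤ C * (1 + ‖x‖) ^ k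

open scoped NNReal

section Auxiliary

variable {n : ℕ}

local notation "EV" => EuclideanSpace ℝ (Fin n)

lemma my_exp_base {a : ℝ} (ha : 0 < a) :
    Integrable (fun x : EV => Real.exp (-(a * ‖x‖^2))) := by
  have I := (GaussianFourier.integrable_cexp_neg_mul_sq_norm_add
    (V := EV) (b := ((a : ℝ) : ℂ)) (by simpa using ha) 0 (0 : EV)).norm
  refine I.congr (Filter.Eventually.of_forall fun x => ?_)
  simp [Complex.norm_exp]
  exact Or.inl (by norm_cast)

lemma my_poly_le_exp (k : ℕ) {a : ℝ} (ha : 0 < a) (r : ℝ) (hr : 0 ≤ r) :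
    (1 + r)^k ≤ Real.exp ((k:ℝ)^2/(2*a)) * Real.exp ((a/2) * r^2) := by
  have h1 : (1 + r)^k ≤ Real.exp ((k:ℝ) * r) := by
    calc (1 + r)^k ≤ (Real.exp r)^k := by
          refine pow_le_pow_left₀ (by linarith) ?_ k
          have := Real.add_one_le_exp r
          linarith
      _ = Real.exp ((k:ℝ) * r) := by rw [← Real.exp_nat_mul]
  have h2 : (k:ℝ) * r ≤ (k:ℝ)^2/(2*a) + (a/2) * r^2 := by
    have h3 : 0 ≤ (a * r - k)^2 := sq_nonneg _
    have h4 : 0 < 2 * a := by linarith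
    rw [div_add' _ _ _ (ne_of_gt h4), le_div_iff₀ h4]
    nlinarith
  calc (1 + r)^k ≤ Real.exp ((k:ℝ) * r) := h1
    _ ≤ Real.exp ((k:ℝ)^2/(2*a) + (a/2) * r^2) := Real.exp_le_exp.mpr h2
    _ = _ := Real.exp_add _ _

lemma my_integrable_poly_gauss (k : ℕ) {a : ℝ} (ha : 0 < a) :
    Integrable (fun x : EV => (1 + ‖x‖)^k * Real.exp (-(a * ‖x‖^2))) := by
  have base := my_exp_base (n := n) (half_pos ha)
  refine ((base.const_mul (Real.exp ((k:ℝ)^2/(2*(a/2))))).mono' ?_ ?_)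
  · exact (Continuous.mul (by continuity) (by continuity)).aestronglyMeasurable
  · refine Filter.Eventually.of_forall fun x => ?_
    have h1 := my_poly_le_exp k (half_pos ha) ‖x‖ (norm_nonneg x)
    have h2 : (0:ℝ) < Real.exp (-(a * ‖x‖^2)) := Real.exp_pos _
    rw [Real.norm_eq_abs, abs_of_nonneg (by positivity)]
    calc (1 + ‖x‖)^k * Real.exp (-(a * ‖x‖^2))
        ≤ (Real.exp ((k:ℝ)^2/(2*(a/2))) * Real.exp ((a/2/2) * ‖x‖^2)) * Real.exp (-(a * ‖x‖^2)) :=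
          mul_le_mul_of_nonneg_right h1 (le_of_lt h2)
      _ = Real.exp ((k:ℝ)^2/(2*(a/2))) * Real.exp ((a/2/2) * ‖x‖^2 + -(a * ‖x‖^2)) := by
          rw [Real.exp_add]; ring
      _ ≤ Real.exp ((k:ℝ)^2/(2*(a/2))) * Real.exp (-(a/2 * ‖x‖^2)) := by
          have : (a/2/2) * ‖x‖^2 + -(a * ‖x‖^2) ≤ -(a/2 * ‖x‖^2) := by nlinarith [sq_nonneg ‖x‖]
          exact mul_le_mul_of_nonneg_left (Real.exp_le_exp.mpr this) (le_of_lt (Real.exp_pos _))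

noncomputable def stdGaussian' (n : ℕ) : Measure (EuclideanSpace ℝ (Fin n)) :=
  (volume : Measure (EuclideanSpace ℝ (Fin n))).withDensity
    (fun x => ENNReal.ofReal ((2 * π) ^ (-(n : ℝ) / 2) * Real.exp (-‖x‖ ^ 2 / 2)))

noncomputable def gaussDen (n : ℕ) (x : EuclideanSpace ℝ (Fin n)) : ℝ :=
  (2 * π) ^ (-(n : ℝ) / 2) * Real.exp (-‖x‖ ^ 2 / 2)

lemma gaussDen_pos (x : EV) : 0 < gaussDen n x := by
  unfold gaussDen
  positivity

lemma gaussDen_cont : Continuous (gaussDen n) := by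
  unfold gaussDen
  continuity

lemma stdGaussian'_eq :
    stdGaussian' n = (volume : Measure EV).withDensity
      (fun x => ((Real.toNNReal (gaussDen n x) : ℝ≥0) : ℝ≥0∞)) := rfl

lemma my_integral_gauss (g : EV → ℝ) :
    ∫ x, g x ∂(stdGaussian' n) = ∫ x, gaussDen n x * g x := by
  rw [stdGaussian'_eq, integral_withDensity_eq_integral_smul
    (gaussDen_cont.measurable.real_toNNReal) g]
  refine integral_congr_ae (Filter.Eventually.of_forall fun x => ?_)
  simp [NNReal.smul_def, Real.coe_toNNReal _ (le_of_lt (gaussDen_pos x))]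

lemma my_integrable_iff (g : EV → ℝ) :
    Integrable g (stdGaussian' n) ↔ Integrable (fun x => g x * gaussDen n x) volume := by
  rw [stdGaussian'_eq]
  rw [integrable_withDensity_iff (gaussDen_cont.measurable.real_toNNReal.coe_nnreal_ennreal) (Filter.Eventually.of_forall fun x => ENNReal.coe_lt_top)]
  constructor <;> intro H <;> refine H.congr (Filter.Eventually.of_forall fun x => ?_) <;>
    simp [Real.coe_toNNReal _ (le_of_lt (gaussDen_pos x))]

lemma my_integrable_polyGrowth (g : EV → ℝ) (hg : Continuous g) (C : ℝ) (k : ℕ)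
    (hb : ∀ x, ‖g x‖ ≤ C * (1 + ‖x‖)^k) : Integrable g (stdGaussian' n) := by
  rw [my_integrable_iff]
  have base := (my_integrable_poly_gauss (n := n) k (a := (1:ℝ)/2) (by norm_num)).const_mul
    (C * (2 * π) ^ (-(n : ℝ) / 2))
  refine base.mono' ((hg.mul gaussDen_cont).aestronglyMeasurable)
    (Filter.Eventually.of_forall fun x => ?_)
  have h1 : ‖g x * gaussDen n x‖ = ‖g x‖ * gaussDen n x := by
    rw [norm_mul, Real.norm_eq_abs (gaussDen n x), abs_of_pos (gaussDen_pos x)]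
  rw [h1]
  have h2 : Real.exp (-‖x‖ ^ 2 / 2) = Real.exp (-((1:ℝ)/2 * ‖x‖^2)) := by ring_nf
  have hC : 0 ≤ C := le_trans (norm_nonneg _) ((hb 0).trans_eq (by simp))
  calc ‖g x‖ * gaussDen n x
      ≤ (C * (1 + ‖x‖)^k) * gaussDen n x :=
        mul_le_mul_of_nonneg_right (hb x) (le_of_lt (gaussDen_pos x))
    _ = C * (2 * π) ^ (-(n : ℝ) / 2) * ((1 + ‖x‖)^k * Real.exp (-((1:ℝ)/2 * ‖x‖^2))) := by
        rw [gaussDen, ← h2]; ring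

lemma my_hasDerivAt_den (x h : EV) (t : ℝ) :
    HasDerivAt (fun s : ℝ => Real.exp (-‖x - s • h‖^2/2))
      (Real.exp (-‖x - t • h‖^2/2) * ⟪x - t • h, h⟫) t := by
  simp only [← real_inner_self_eq_norm_sq]
  have hu : HasDerivAt (fun s : ℝ => x - s • h) (-((1:ℝ) • h)) t :=
    ((hasDerivAt_id t).smul_const h).const_sub x
  have hu' : HasDerivAt (fun s : ℝ => x - s • h) (-h) t := by simpa using hu
  have hw := hu'.inner ℝ hu'
  have hw2 : HasDerivAt (fun s : ℝ => -⟪x - s • h, x - s • h⟫/2) (⟪x - t • h, h⟫) t := by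
    have := (hw.neg).div_const 2
    refine this.congr_deriv ?_
    rw [inner_neg_right, inner_neg_left, real_inner_comm h (x - t • h)]
    ring
  simpa [neg_div] using hw2.exp

lemma my_stein (g : EV → ℝ) (hg : ContDiff ℝ 1 g) {C : ℝ} {k : ℕ} (hC : 0 ≤ C)
    (hgb : ∀ x : EV, ‖g x‖ ≤ C * (1 + ‖x‖)^k)
    (hg'b : ∀ x : EV, ‖fderiv ℝ g x‖ ≤ C * (1 + ‖x‖)^k) (h : EV) :
    ∫ x, ⟪x, h⟫ * g x ∂(stdGaussian' n) = ∫ x, fderiv ℝ g x h ∂(stdGaussian' n) := by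
  have hgc : Continuous g := hg.continuous
  have hfc : Continuous (fun x : EV => fderiv ℝ g x) := (hg.fderiv_right (m := 0) (by norm_num)).continuous
  set c : ℝ := (2 * π) ^ (-(n : ℝ) / 2) with hcdef
  have hc : 0 < c := by rw [hcdef]; positivity
  set F : ℝ → EV → ℝ := fun t x => g x * (c * Real.exp (-‖x - t • h‖^2/2)) with hF
  set F' : ℝ → EV → ℝ := fun t x => g x * (c * Real.exp (-‖x - t • h‖^2/2) * ⟪x - t • h, h⟫)
    with hF'
  set G : ℝ → EV → ℝ := fun t x => g (x + t • h) * (c * Real.exp (-‖x‖^2/2)) with hG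
  set G' : ℝ → EV → ℝ := fun t x => fderiv ℝ g (x + t • h) h * (c * Real.exp (-‖x‖^2/2))
    with hG'
  -- the two families have the same integral
  have key : ∀ t : ℝ, (∫ x, F t x) = ∫ x, G t x := by
    intro t
    have e1 := integral_add_right_eq_self (μ := (volume : Measure EV))
      (fun y : EV => g y * (c * Real.exp (-‖y - t • h‖^2/2))) (t • h)
    calc (∫ x, F t x) = ∫ x : EV, g (x + t • h) * (c * Real.exp (-‖x + t • h - t • h‖^2/2)) := by
          rw [hF]; exact e1.symm
      _ = ∫ x, G t x := by congr 1; funext x; rw [hG]; simp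
  -- integrability of the base point functions
  have hbase : Integrable (fun x : EV => g x * gaussDen n x) volume :=
    (my_integrable_iff g).mp (my_integrable_polyGrowth g hgc C k hgb)
  have hFint : Integrable (F 0) volume := by
    refine hbase.congr (Filter.Eventually.of_forall fun x => ?_)
    rw [hF]; simp [gaussDen, hcdef]
  have hGint : Integrable (G 0) volume := by
    refine hbase.congr (Filter.Eventually.of_forall fun x => ?_)
    rw [hG]; simp [gaussDen, hcdef]
  -- derivative of F under the integral
  have dF := hasDerivAt_integral_of_dominated_loc_of_deriv_le (μ := (volume : Measure EV))
    (F := F) (F' := F') (x₀ := (0:ℝ))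
    (bound := fun x : EV => (C * c * ((1+‖h‖)*‖h‖) * Real.exp (‖h‖^2)) *
      ((1 + ‖x‖)^(k+1) * Real.exp (-(1/4 * ‖x‖^2))))
    (Metric.ball_mem_nhds (0:ℝ) one_pos)
    (Filter.Eventually.of_forall fun t => by
      rw [hF]
      exact (hgc.mul (continuous_const.mul (Real.continuous_exp.comp (((continuous_norm.comp (continuous_id.sub continuous_const)).pow 2).neg.div_const 2)))).aestronglyMeasurable)
    hFint
    (by
      rw [hF']
      refine Continuous.aestronglyMeasurable ?_
      refine hgc.mul (Continuous.mul (continuous_const.mul (Real.continuous_exp.comp (((continuous_norm.comp (continuous_id.sub continuous_const)).pow 2).neg.div_const 2))) ?_)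
      exact (continuous_id.sub continuous_const).inner continuous_const)
    (Filter.Eventually.of_forall fun x => by
      intro t ht
      have ht1 : |t| ≤ 1 := by
        have := Metric.mem_ball.mp ht
        rw [Real.dist_eq, sub_zero] at this
        linarith
      have h0 : ‖x - t • h‖ ≤ ‖x‖ + ‖h‖ := by
        refine (norm_sub_le _ _).trans ?_
        have : ‖t • h‖ = |t| * ‖h‖ := by rw [norm_smul, Real.norm_eq_abs]
        nlinarith [norm_nonneg h]
      have hinner : |⟪x - t • h, h⟫| ≤ (‖x‖ + ‖h‖) * ‖h‖ :=
        (abs_real_inner_le_norm _ _).trans (mul_le_mul_of_nonneg_right h0 (norm_nonneg h))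
      have hexp : Real.exp (-‖x - t • h‖^2/2) ≤ Real.exp (‖h‖^2) * Real.exp (-(1/4 * ‖x‖^2)) := by
        rw [← Real.exp_add]
        apply Real.exp_le_exp.mpr
        have hn : ‖x - t • h‖^2 = ‖x‖^2 - 2*(t*⟪x, h⟫) + t^2*‖h‖^2 := by
          rw [norm_sub_sq_real, real_inner_smul_right, norm_smul, Real.norm_eq_abs, mul_pow,
            sq_abs]
        have h5 : t * ⟪x, h⟫ ≤ ‖x‖ * ‖h‖ := by
          calc t * ⟪x, h⟫ ≤ |t * ⟪x, h⟫| := le_abs_self _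
            _ = |t| * |⟪x, h⟫| := abs_mul _ _
            _ ≤ 1 * (‖x‖ * ‖h‖) :=
                mul_le_mul ht1 (abs_real_inner_le_norm _ _) (abs_nonneg _) zero_le_one
            _ = ‖x‖ * ‖h‖ := one_mul _
        rw [hn]
        nlinarith [sq_nonneg (‖x‖ - 2*‖h‖), sq_nonneg (t*‖h‖)]
      have habs : ‖F' t x‖ = ‖g x‖ * (c * Real.exp (-‖x - t • h‖^2/2) * |⟪x - t • h, h⟫|) := by
        rw [hF']
        simp only [Real.norm_eq_abs, abs_mul, abs_of_pos hc, abs_of_pos (Real.exp_pos _)]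
      rw [habs]
      calc ‖g x‖ * (c * Real.exp (-‖x - t • h‖^2/2) * |⟪x - t • h, h⟫|)
          ≤ (C * (1 + ‖x‖)^k) *
            (c * (Real.exp (‖h‖^2) * Real.exp (-(1/4 * ‖x‖^2))) * ((1+‖h‖)*(1+‖x‖)*‖h‖)) := by
            have hin2 : |⟪x - t • h, h⟫| ≤ (1+‖h‖)*(1+‖x‖)*‖h‖ := by
              refine hinner.trans ?_
              have : (‖x‖ + ‖h‖) ≤ (1+‖h‖)*(1+‖x‖) := by nlinarith [norm_nonneg x, norm_nonneg h]
              exact mul_le_mul_of_nonneg_right this (norm_nonneg h)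
            gcongr
            exact hgb x
          _ = (C * c * ((1+‖h‖)*‖h‖) * Real.exp (‖h‖^2)) *
              ((1 + ‖x‖)^(k+1) * Real.exp (-(1/4 * ‖x‖^2))) := by
            rw [pow_succ]; ring)
    ((my_integrable_poly_gauss (n := n) (k+1) (show (0:ℝ) < 1/4 by norm_num)).const_mul _)
    (Filter.Eventually.of_forall fun x => by
      intro t _
      have := ((my_hasDerivAt_den x h t).const_mul c).const_mul (g x)
      refine this.congr_deriv ?_
      rw [hF']; ring)
  -- derivative of G under the integral
  have dG := hasDerivAt_integral_of_dominated_loc_of_deriv_le (μ := (volume : Measure EV))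
    (F := G) (F' := G') (x₀ := (0:ℝ))
    (bound := fun x : EV => (C * ‖h‖ * (1+‖h‖)^k * c) * ((1 + ‖x‖)^k * Real.exp (-(1/2 * ‖x‖^2))))
    (Metric.ball_mem_nhds (0:ℝ) one_pos)
    (Filter.Eventually.of_forall fun t => by
      rw [hG]
      exact ((hgc.comp (continuous_id.add continuous_const)).mul (continuous_const.mul (Real.continuous_exp.comp ((continuous_norm.pow 2).neg.div_const 2)))).aestronglyMeasurable)
    hGint
    (by
      rw [hG']
      refine Continuous.aestronglyMeasurable (Continuous.mul ?_ (continuous_const.mul (Real.continuous_exp.comp ((continuous_norm.pow 2).neg.div_const 2))))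
      exact ((hfc.comp (continuous_id.add continuous_const)).clm_apply continuous_const))
    (Filter.Eventually.of_forall fun x => by
      intro t ht
      have ht1 : |t| ≤ 1 := by
        have := Metric.mem_ball.mp ht
        rw [Real.dist_eq, sub_zero] at this
        linarith
      have h0 : ‖x + t • h‖ ≤ ‖x‖ + ‖h‖ := by
        refine (norm_add_le _ _).trans ?_
        have : ‖t • h‖ = |t| * ‖h‖ := by rw [norm_smul, Real.norm_eq_abs]
        nlinarith [norm_nonneg h]
      have habs : ‖G' t x‖ = |fderiv ℝ g (x + t • h) h| * (c * Real.exp (-‖x‖^2/2)) := by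
        rw [hG']
        simp only [Real.norm_eq_abs, abs_mul, abs_of_pos hc, abs_of_pos (Real.exp_pos _)]
      rw [habs]
      have hd : |fderiv ℝ g (x + t • h) h| ≤ (C * ((1+‖h‖)*(1+‖x‖))^k) * ‖h‖ := by
        calc |fderiv ℝ g (x + t • h) h| ≤ ‖fderiv ℝ g (x + t • h)‖ * ‖h‖ :=
              (fderiv ℝ g (x + t • h)).le_opNorm h
          _ ≤ (C * (1 + ‖x + t • h‖)^k) * ‖h‖ :=
              mul_le_mul_of_nonneg_right (hg'b _) (norm_nonneg h)
          _ ≤ (C * ((1+‖h‖)*(1+‖x‖))^k) * ‖h‖ := by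
              have h1 : (1 + ‖x + t • h‖) ≤ (1+‖h‖)*(1+‖x‖) := by
                nlinarith [norm_nonneg x, norm_nonneg h]
              have h2 : (1 + ‖x + t • h‖)^k ≤ ((1+‖h‖)*(1+‖x‖))^k := by
                refine pow_le_pow_left₀ (by positivity) h1 k
              gcongr
      have hexp2 : Real.exp (-‖x‖^2/2) = Real.exp (-(1/2 * ‖x‖^2)) := by ring_nf
      calc |fderiv ℝ g (x + t • h) h| * (c * Real.exp (-‖x‖^2/2))
          ≤ ((C * ((1+‖h‖)*(1+‖x‖))^k) * ‖h‖) * (c * Real.exp (-‖x‖^2/2)) := by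
            gcongr
        _ = (C * ‖h‖ * (1+‖h‖)^k * c) * ((1 + ‖x‖)^k * Real.exp (-(1/2 * ‖x‖^2))) := by
            rw [← hexp2, mul_pow]; ring)
    ((my_integrable_poly_gauss (n := n) k (show (0:ℝ) < 1/2 by norm_num)).const_mul _)
    (Filter.Eventually.of_forall fun x => by
      intro t _
      have hv : HasDerivAt (fun s : ℝ => x + s • h) h t := by
        simpa using ((hasDerivAt_id t).smul_const h).const_add x
      have hgf := ((hg.differentiable one_ne_zero) (x + t • h)).hasFDerivAt.comp_hasDerivAt t hv
      exact hgf.mul_const (c * Real.exp (-‖x‖^2/2)))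
  -- identify the two derivatives
  have hfun : (fun t => ∫ x, F t x) = fun t => ∫ x, G t x := funext key
  have dF2 : HasDerivAt (fun t => ∫ x, G t x) (∫ x, F' 0 x) 0 := hfun ▸ dF.2
  have huniq : (∫ x, F' 0 x) = ∫ x, G' 0 x := dF2.unique dG.2
  -- convert back to Gaussian integrals
  calc ∫ x, ⟪x, h⟫ * g x ∂(stdGaussian' n)
      = ∫ x, gaussDen n x * (⟪x, h⟫ * g x) := my_integral_gauss _
    _ = ∫ x, F' 0 x := by
        congr 1; funext x; rw [hF']; simp [gaussDen, hcdef]; ring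
    _ = ∫ x, G' 0 x := huniq
    _ = ∫ x, gaussDen n x * fderiv ℝ g x h := by
        congr 1; funext x; rw [hG']; simp [gaussDen, hcdef]; ring
    _ = ∫ x, fderiv ℝ g x h ∂(stdGaussian' n) := (my_integral_gauss _).symm

lemma my_gradient_contDiff (φ : EV → ℝ) (hφ : ContDiff ℝ 2 φ) : ContDiff ℝ 1 (gradient φ) := by
  have h1 : ContDiff ℝ 1 (fun x : EV => fderiv ℝ φ x) := hφ.fderiv_right (m := 1) (by norm_num)
  have h2 := ((InnerProductSpace.toDual ℝ EV).symm.contDiff (n := 1)).comp h1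
  exact h2

end Auxiliary

set_option maxHeartbeats 2000000 in
theorem stmt_3 (n : ℕ) (L : EuclideanSpace ℝ (Fin n) → ℝ)
    (hLmeas : Measurable L) (hLnonneg : ∀ x, 0 ≤ L x)
    (hLint : ∫ x, L x ∂(stdGaussian n) = 1)
    (hLmoment : Integrable (fun x => L x * ‖x‖ ^ 2) (stdGaussian n))
    (φ : EuclideanSpace ℝ (Fin n) → ℝ)
    (hφ : ContDiff ℝ 2 φ)
    (hgrad : PolyGrowth (fun x => gradient φ x))
    (hhess : PolyGrowth (fun x => fderiv ℝ (gradient φ) x))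
    (hT : (stdGaussian n).map (fun x => x + gradient φ x)
        = (stdGaussian n).withDensity (fun x => ENNReal.ofReal (L x))) :
    ∀ h : EuclideanSpace ℝ (Fin n),
      ∫ x, L x * (⟪x, h⟫ ^ 2 - ‖h‖ ^ 2) ∂(stdGaussian n)
        = (∫ x, ⟪gradient φ x, h⟫ ^ 2 ∂(stdGaussian n))
          + 2 * ∫ x, ⟪fderiv ℝ (gradient φ) x h, h⟫ ∂(stdGaussian n) := by
  intro h
  have hsg : stdGaussian n = stdGaussian' n := rfl
  have hgradCD : ContDiff ℝ 1 (gradient φ) := my_gradient_contDiff φ hφ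
  have hgradc : Continuous (gradient φ) := hgradCD.continuous
  simp only [hsg] at hLint hT ⊢
  obtain ⟨C₀, hC₀, k₀, hgrad⟩ := hgrad
  obtain ⟨C₁, hC₁, k₁, hhess⟩ := hhess
  have hTm : Measurable (fun x : EuclideanSpace ℝ (Fin n) => x + gradient φ x) :=
    (continuous_id.add hgradc).measurable
  -- the Gaussian is a probability measure
  have hLint' : Integrable L (stdGaussian' n) := by
    by_contra hcon
    rw [integral_undef hcon] at hLint; norm_num at hLint
  have hmass : (stdGaussian' n) Set.univ = 1 := by
    have h1 : (stdGaussian' n).map (fun x => x + gradient φ x) Set.univ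
        = stdGaussian' n Set.univ := by
      rw [Measure.map_apply hTm MeasurableSet.univ, Set.preimage_univ]
    have h2 : (stdGaussian' n).withDensity (fun x => ENNReal.ofReal (L x)) Set.univ
        = ENNReal.ofReal (∫ x, L x ∂(stdGaussian' n)) := by
      rw [withDensity_apply _ MeasurableSet.univ, setLIntegral_univ,
        ← ofReal_integral_eq_lintegral_ofReal hLint' (Filter.Eventually.of_forall hLnonneg)]
    rw [← h1, hT, h2, hLint]
    norm_num
  have hprob : IsProbabilityMeasure (stdGaussian' n) := ⟨hmass⟩
  -- transfer identity
  have transfer : ∀ f : EuclideanSpace ℝ (Fin n) → ℝ, Continuous f →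
      ∫ x, L x * f x ∂(stdGaussian' n) = ∫ x, f (x + gradient φ x) ∂(stdGaussian' n) := by
    intro f hf
    have e1 : ∫ x, f x ∂((stdGaussian' n).map (fun x => x + gradient φ x))
        = ∫ x, f (x + gradient φ x) ∂(stdGaussian' n) :=
      integral_map hTm.aemeasurable hf.aestronglyMeasurable
    have e2 : ∫ x, f x ∂((stdGaussian' n).withDensity (fun x => ENNReal.ofReal (L x)))
        = ∫ x, L x * f x ∂(stdGaussian' n) := by
      have hre : (fun x : EuclideanSpace ℝ (Fin n) => ENNReal.ofReal (L x))
          = fun x => ((Real.toNNReal (L x) : ℝ≥0) : ℝ≥0∞) := rfl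
      rw [hre, integral_withDensity_eq_integral_smul hLmeas.real_toNNReal f]
      refine integral_congr_ae (Filter.Eventually.of_forall fun x => ?_)
      simp [NNReal.smul_def, Real.coe_toNNReal _ (hLnonneg x)]
    rw [← e2, ← hT, e1]
  -- integrability of the three pieces
  have hA : Integrable (fun x : EuclideanSpace ℝ (Fin n) => ⟪x, h⟫^2 - ‖h‖^2) (stdGaussian' n) := by
    refine my_integrable_polyGrowth _ (((continuous_id.inner continuous_const).pow 2).sub
      continuous_const) (2*(1+‖h‖)^2) 2 (fun x => ?_)
    have h1 : ⟪x, h⟫^2 ≤ (‖x‖ * ‖h‖)^2 := by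
      have h2 := abs_real_inner_le_norm x h
      nlinarith [abs_nonneg ⟪x, h⟫, sq_abs ⟪x, h⟫]
    have h3 : (‖x‖ * ‖h‖)^2 ≤ ((1+‖h‖)*(1+‖x‖))^2 :=
      pow_le_pow_left₀ (by positivity) (by nlinarith [norm_nonneg x, norm_nonneg h]) 2
    have p1 : (1:ℝ) ≤ (1+‖x‖)^2 := by nlinarith [norm_nonneg x]
    have p2 : ‖h‖^2 ≤ (1+‖h‖)^2 := by nlinarith [norm_nonneg h]
    have p3 : (1+‖h‖)^2 ≤ (1+‖h‖)^2*(1+‖x‖)^2 := le_mul_of_one_le_right (by positivity) p1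
    rw [Real.norm_eq_abs, abs_le]
    constructor <;> nlinarith [h1, h3, p2, p3, sq_nonneg ⟪x, h⟫]
  have hA2 : Integrable (fun x : EuclideanSpace ℝ (Fin n) => ⟪x, h⟫^2) (stdGaussian' n) := by
    refine my_integrable_polyGrowth _ ((continuous_id.inner continuous_const).pow 2)
      ((1+‖h‖)^2) 2 (fun x => ?_)
    have h1 : ⟪x, h⟫^2 ≤ (‖x‖ * ‖h‖)^2 := by
      have h2 := abs_real_inner_le_norm x h
      nlinarith [abs_nonneg ⟪x, h⟫, sq_abs ⟪x, h⟫]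
    have h3 : (‖x‖ * ‖h‖)^2 ≤ ((1+‖h‖)*(1+‖x‖))^2 :=
      pow_le_pow_left₀ (by positivity) (by nlinarith [norm_nonneg x, norm_nonneg h]) 2
    have p1 : (1:ℝ) ≤ (1+‖x‖)^2 := by nlinarith [norm_nonneg x]
    have p2 : ‖h‖^2 ≤ (1+‖h‖)^2 := by nlinarith [norm_nonneg h]
    have p3 : (1+‖h‖)^2 ≤ (1+‖h‖)^2*(1+‖x‖)^2 := le_mul_of_one_le_right (by positivity) p1
    rw [Real.norm_eq_abs, abs_le]
    constructor <;> nlinarith [h1, h3, p2, p3, sq_nonneg ⟪x, h⟫]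
  have hB : Integrable (fun x : EuclideanSpace ℝ (Fin n) => ⟪x, h⟫ * ⟪gradient φ x, h⟫) (stdGaussian' n) := by
    refine my_integrable_polyGrowth _ ((continuous_id.inner continuous_const).mul
      (hgradc.inner continuous_const)) (C₀*(1+‖h‖)^2) (k₀+1) (fun x => ?_)
    rw [Real.norm_eq_abs, abs_mul]
    calc |⟪x, h⟫| * |⟪gradient φ x, h⟫|
        ≤ (‖x‖ * ‖h‖) * ((C₀ * (1+‖x‖)^k₀) * ‖h‖) := by
          refine mul_le_mul (abs_real_inner_le_norm _ _) ?_ (abs_nonneg _) (by positivity)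
          exact (abs_real_inner_le_norm _ _).trans
            (mul_le_mul_of_nonneg_right (hgrad x) (norm_nonneg h))
      _ = C₀ * ‖h‖^2 * ((1+‖x‖)^k₀ * ‖x‖) := by ring
      _ ≤ C₀ * (1+‖h‖)^2 * ((1+‖x‖)^k₀ * (1+‖x‖)) := by
          gcongr <;> nlinarith [norm_nonneg h, norm_nonneg x]
      _ = C₀ * (1+‖h‖)^2 * (1+‖x‖)^(k₀+1) := by rw [pow_succ (1+‖x‖) k₀]
  have hC : Integrable (fun x : EuclideanSpace ℝ (Fin n) => ⟪gradient φ x, h⟫^2) (stdGaussian' n) := by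
    refine my_integrable_polyGrowth _ ((hgradc.inner continuous_const).pow 2)
      (C₀^2*(1+‖h‖)^2) (2*k₀) (fun x => ?_)
    have h1 : |⟪gradient φ x, h⟫| ≤ (C₀ * (1+‖x‖)^k₀) * ‖h‖ :=
      (abs_real_inner_le_norm _ _).trans
        (mul_le_mul_of_nonneg_right (hgrad x) (norm_nonneg h))
    rw [Real.norm_eq_abs]
    have h2 : |⟪gradient φ x, h⟫^2| = |⟪gradient φ x, h⟫|^2 := by rw [abs_pow]
    rw [h2]
    calc |⟪gradient φ x, h⟫|^2 ≤ ((C₀ * (1+‖x‖)^k₀) * ‖h‖)^2 :=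
          pow_le_pow_left₀ (abs_nonneg _) h1 2
      _ = C₀^2 * ‖h‖^2 * ((1+‖x‖)^k₀)^2 := by ring
      _ ≤ C₀^2 * (1+‖h‖)^2 * ((1+‖x‖)^k₀)^2 := by
          gcongr <;> nlinarith [norm_nonneg h]
      _ = C₀^2 * (1+‖h‖)^2 * (1+‖x‖)^(2*k₀) := by
          rw [← pow_mul, mul_comm k₀ 2]
  -- Stein application 1 : second moment
  have g1eq : (fun x : EuclideanSpace ℝ (Fin n) => ⟪x, h⟫)
      = fun x => (innerSL ℝ h) x := funext fun x => real_inner_comm _ _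
  have hfd1 : ∀ x : EuclideanSpace ℝ (Fin n),
      fderiv ℝ (fun y : EuclideanSpace ℝ (Fin n) => ⟪y, h⟫) x = innerSL ℝ h := by
    intro x
    rw [g1eq]
    exact (innerSL ℝ h).fderiv
  have stein1 : ∫ x, ⟪x, h⟫ * ⟪x, h⟫ ∂(stdGaussian' n) = ‖h‖^2 := by
    have hs := my_stein (fun x : EuclideanSpace ℝ (Fin n) => ⟪x, h⟫)
      (by rw [g1eq]; exact (innerSL ℝ h).contDiff)
      (C := 1 + ‖h‖) (k := 1) (by positivity)
      (fun x => by
        rw [Real.norm_eq_abs]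
        have := abs_real_inner_le_norm x h
        nlinarith [norm_nonneg x, norm_nonneg h])
      (fun x => by
        rw [hfd1, innerSL_apply_norm]
        nlinarith [norm_nonneg x, norm_nonneg h]) h
    rw [hs]
    have : ∀ x : EuclideanSpace ℝ (Fin n),
        fderiv ℝ (fun y : EuclideanSpace ℝ (Fin n) => ⟪y, h⟫) x h = ‖h‖^2 := by
      intro x
      rw [hfd1]
      exact real_inner_self_eq_norm_sq h
    rw [integral_congr_ae (Filter.Eventually.of_forall this), integral_const]
    simp [hmass]
  have e3 : ∫ x, (⟪x, h⟫^2 - ‖h‖^2) ∂(stdGaussian' n) = 0 := by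
    rw [integral_sub hA2 (integrable_const _), integral_const]
    have : ∫ x, ⟪x, h⟫^2 ∂(stdGaussian' n) = ∫ x, ⟪x, h⟫ * ⟪x, h⟫ ∂(stdGaussian' n) := by
      congr 1; funext x; ring
    rw [this, stein1]
    simp [hmass]
  -- Stein application 2 : the cross term
  have g2CD : ContDiff ℝ 1 (fun x : EuclideanSpace ℝ (Fin n) => ⟪gradient φ x, h⟫) :=
    hgradCD.inner ℝ contDiff_const
  have hfd2 : ∀ x : EuclideanSpace ℝ (Fin n),
      fderiv ℝ (fun y : EuclideanSpace ℝ (Fin n) => ⟪gradient φ y, h⟫) x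
        = (innerSL ℝ h).comp (fderiv ℝ (gradient φ) x) := by
    intro x
    have hgf : HasFDerivAt (fun y : EuclideanSpace ℝ (Fin n) => (innerSL ℝ h) (gradient φ y))
        ((innerSL ℝ h).comp (fderiv ℝ (gradient φ) x)) x :=
      (innerSL ℝ h).hasFDerivAt.comp x (hgradCD.differentiable one_ne_zero x).hasFDerivAt
    have e : (fun y : EuclideanSpace ℝ (Fin n) => ⟪gradient φ y, h⟫)
        = fun y => (innerSL ℝ h) (gradient φ y) := funext fun y => real_inner_comm _ _
    rw [e]
    exact hgf.fderiv
  set k₂ : ℕ := max k₀ k₁ with hk₂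
  have hmono : ∀ (j : ℕ), j ≤ k₂ → ∀ x : EuclideanSpace ℝ (Fin n),
      (1 + ‖x‖)^j ≤ (1 + ‖x‖)^k₂ := fun j hj x =>
    pow_le_pow_right₀ (by nlinarith [norm_nonneg x]) hj
  have hk2p : ∀ x : EuclideanSpace ℝ (Fin n), (0:ℝ) ≤ (1 + ‖x‖)^k₂ :=
    fun x => pow_nonneg (by nlinarith [norm_nonneg x]) k₂
  have hb1 : ∀ x : EuclideanSpace ℝ (Fin n),
      ‖⟪gradient φ x, h⟫‖ ≤ ((C₀+C₁)*(1+‖h‖)) * (1+‖x‖)^k₂ := by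
    intro x
    rw [Real.norm_eq_abs]
    have h1 : |⟪gradient φ x, h⟫| ≤ (C₀ * (1+‖x‖)^k₀) * ‖h‖ :=
      (abs_real_inner_le_norm _ _).trans
        (mul_le_mul_of_nonneg_right (hgrad x) (norm_nonneg h))
    have h2 := hmono k₀ (le_max_left _ _) x
    calc |⟪gradient φ x, h⟫| ≤ (C₀ * (1+‖x‖)^k₀) * ‖h‖ := h1
      _ ≤ (C₀ * (1+‖x‖)^k₂) * ‖h‖ :=
          mul_le_mul_of_nonneg_right (mul_le_mul_of_nonneg_left h2 (le_of_lt hC₀)) (norm_nonneg h)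
      _ = (C₀ * ‖h‖) * (1+‖x‖)^k₂ := by ring
      _ ≤ ((C₀+C₁)*(1+‖h‖)) * (1+‖x‖)^k₂ := by
          refine mul_le_mul_of_nonneg_right ?_ (hk2p x)
          nlinarith [norm_nonneg h]
  have hb2 : ∀ x : EuclideanSpace ℝ (Fin n),
      ‖fderiv ℝ (fun y : EuclideanSpace ℝ (Fin n) => ⟪gradient φ y, h⟫) x‖
        ≤ ((C₀+C₁)*(1+‖h‖)) * (1+‖x‖)^k₂ := by
    intro x
    rw [hfd2]
    have h1 : ‖(innerSL ℝ h).comp (fderiv ℝ (gradient φ) x)‖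
        ≤ ‖h‖ * ‖fderiv ℝ (gradient φ) x‖ := by
      refine (ContinuousLinearMap.opNorm_comp_le _ _).trans ?_
      rw [innerSL_apply_norm]
    have h3 := hmono k₁ (le_max_right _ _) x
    calc ‖(innerSL ℝ h).comp (fderiv ℝ (gradient φ) x)‖
        ≤ ‖h‖ * ‖fderiv ℝ (gradient φ) x‖ := h1
      _ ≤ ‖h‖ * (C₁ * (1+‖x‖)^k₂) := by
          refine mul_le_mul_of_nonneg_left ?_ (norm_nonneg h)
          exact (hhess x).trans (mul_le_mul_of_nonneg_left h3 (le_of_lt hC₁))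
      _ = (‖h‖ * C₁) * (1+‖x‖)^k₂ := by ring
      _ ≤ ((C₀+C₁)*(1+‖h‖)) * (1+‖x‖)^k₂ := by
          refine mul_le_mul_of_nonneg_right ?_ (hk2p x)
          nlinarith [norm_nonneg h]
  have stein2 : ∫ x, ⟪x, h⟫ * ⟪gradient φ x, h⟫ ∂(stdGaussian' n)
      = ∫ x, ⟪fderiv ℝ (gradient φ) x h, h⟫ ∂(stdGaussian' n) := by
    have hs := my_stein (fun x : EuclideanSpace ℝ (Fin n) => ⟪gradient φ x, h⟫) g2CD
      (C := (C₀ + C₁) * (1 + ‖h‖)) (k := k₂) (by positivity) hb1 hb2 h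
    rw [hs]
    congr 1
    funext x
    rw [hfd2]
    simp only [ContinuousLinearMap.coe_comp', Function.comp_apply, innerSL_apply_apply]
    exact real_inner_comm _ _
  -- transfer and expand
  have hfc2 : Continuous (fun y : EuclideanSpace ℝ (Fin n) => ⟪y, h⟫^2 - ‖h‖^2) :=
    ((continuous_id.inner continuous_const).pow 2).sub continuous_const
  have expand : ∀ x : EuclideanSpace ℝ (Fin n),
      ⟪x + gradient φ x, h⟫^2 - ‖h‖^2
        = (⟪x, h⟫^2 - ‖h‖^2) + (2 * (⟪x, h⟫ * ⟪gradient φ x, h⟫) + ⟪gradient φ x, h⟫^2) := by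
    intro x
    rw [inner_add_left]
    ring
  calc ∫ x, L x * (⟪x, h⟫ ^ 2 - ‖h‖ ^ 2) ∂(stdGaussian' n)
      = ∫ x, (⟪x + gradient φ x, h⟫^2 - ‖h‖^2) ∂(stdGaussian' n) :=
        transfer _ hfc2
    _ = ∫ x, ((⟪x, h⟫^2 - ‖h‖^2)
          + (2 * (⟪x, h⟫ * ⟪gradient φ x, h⟫) + ⟪gradient φ x, h⟫^2)) ∂(stdGaussian' n) :=
        integral_congr_ae (Filter.Eventually.of_forall expand)
    _ = (∫ x, (⟪x, h⟫^2 - ‖h‖^2) ∂(stdGaussian' n))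
          + ((∫ x, 2 * (⟪x, h⟫ * ⟪gradient φ x, h⟫) ∂(stdGaussian' n))
            + ∫ x, ⟪gradient φ x, h⟫^2 ∂(stdGaussian' n)) := by
        have i1 := integral_add hA ((hB.const_mul 2).add hC)
        simp only [Pi.add_apply] at i1
        rw [i1, integral_add (hB.const_mul 2) hC]
    _ = (∫ x, ⟪gradient φ x, h⟫ ^ 2 ∂(stdGaussian' n))
          + 2 * ∫ x, ⟪fderiv ℝ (gradient φ) x h, h⟫ ∂(stdGaussian' n) := by
        rw [e3, integral_const_mul, stein2]
        ring
end

section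
/- Let γ be the standard Gaussian measure on ℝⁿ and let m be a nonzero finite positive Borel measure on ℝⁿ with ∫ ‖y‖² dm(y) < ∞. Let φ : ℝⁿ → ℝ be a C² function whose gradient and Hessian have at most polynomial growth, and assume the pushforward of γ under T(x) = x + ∇φ(x) equals the normalized measure m/m(ℝⁿ). Then for every h ∈ ℝⁿ, (1/(2·m(ℝⁿ))) · ( ∫ (⟨y,h⟩² − ‖h‖²) dm(y) − (1/m(ℝⁿ)) · ( ∫ ⟨y,h⟩ dm(y) )² ) ≥ ∫ ⟨Hess φ(x) h, h⟩ dγ(x). (This is the paper's Corollary 1, inequality (3): (1/(2m(W)))·{M₂ − M₁⊗M₁/m(W)} ≥ E[∇²φ], where M₁(h) = ∫⟨y,h⟩dm and M₂(h⊗h) = ∫(⟨y,h⟩² − ‖h‖²)dm are the first- and second-chaos kernels of m, in the finite-dimensional Gaussian setting.) -/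
open MeasureTheory Real
open scoped RealInnerProductSpace ENNReal

namespace StdGaussAux

variable {n : ℕ}

local notation "E'" => EuclideanSpace ℝ (Fin n)

noncomputable def dens (n : ℕ) (x : EuclideanSpace ℝ (Fin n)) : ℝ :=
  (2 * π) ^ (-(n : ℝ) / 2) * Real.exp (-‖x‖ ^ 2 / 2)

lemma dens_pos (x : E') : 0 < dens n x := by
  have h2π : (0:ℝ) < 2 * π := by positivity
  exact mul_pos (Real.rpow_pos_of_pos h2π _) (Real.exp_pos _)

lemma continuous_dens : Continuous (dens n) := by
  apply Continuous.mul continuous_const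
  exact Real.continuous_exp.comp (by continuity)

lemma stdGaussian_eq :
    stdGaussian n = volume.withDensity (fun x => ((dens n x).toNNReal : ℝ≥0∞)) := rfl

lemma integral_stdGaussian (f : E' → ℝ) :
    ∫ x, f x ∂(stdGaussian n) = ∫ x, dens n x * f x := by
  rw [stdGaussian_eq, integral_withDensity_eq_integral_smul
    (by exact (continuous_dens.measurable).real_toNNReal) f]
  congr 1
  ext x
  simp [NNReal.smul_def, Real.coe_toNNReal _ (dens_pos x).le]

lemma integrable_stdGaussian_iff (f : E' → ℝ) :
    Integrable f (stdGaussian n) ↔ Integrable (fun x => dens n x * f x) := by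
  rw [stdGaussian_eq]
  rw [integrable_withDensity_iff
    (by exact continuous_dens.measurable.real_toNNReal.coe_nnreal_ennreal)
    (Filter.Eventually.of_forall fun x => ENNReal.coe_lt_top)]
  constructor <;> intro h <;>
  · refine h.congr (Filter.Eventually.of_forall fun x => ?_)
    simp [Real.coe_toNNReal _ (dens_pos x).le, mul_comm]

theorem integ4 : Integrable (fun v : E' => rexp (-(4⁻¹:ℝ) * ‖v‖^2)) := by
  have h := (GaussianFourier.integrable_cexp_neg_mul_sq_norm_add
    (show (0:ℝ) < ((4⁻¹ : ℂ)).re by norm_num) 0 (0 : E')).norm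
  refine h.congr (Filter.Eventually.of_forall fun x => ?_)
  show ‖Complex.exp _‖ = _
  rw [Complex.norm_exp]
  congr 1
  simp [← Complex.ofReal_pow]

lemma key_bound (a : ℝ) (k : ℕ) (ha : 0 ≤ a) {t : ℝ} (ht : 0 ≤ t) :
    (1 + t)^k * rexp (a*t) * rexp (-t^2/2) ≤ rexp ((k+a)^2) * rexp (-4⁻¹*t^2) := by
  have h1 : (1 + t)^k ≤ rexp (k * t) := by
    calc (1 + t)^k ≤ (rexp t)^k := by
          exact pow_le_pow_left₀ (by linarith) (by linarith [Real.add_one_le_exp t]) k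
    _ = rexp (k * t) := by rw [← Real.exp_nat_mul]
  calc (1 + t)^k * rexp (a*t) * rexp (-t^2/2)
      ≤ rexp (k*t) * rexp (a*t) * rexp (-t^2/2) := by
        apply mul_le_mul_of_nonneg_right (mul_le_mul_of_nonneg_right h1 (Real.exp_pos _).le)
          (Real.exp_pos _).le
    _ = rexp (k*t + a*t + -t^2/2) := by rw [← Real.exp_add, ← Real.exp_add]
    _ ≤ rexp ((k+a)^2 + -4⁻¹*t^2) := by
        apply Real.exp_le_exp.2
        nlinarith [sq_nonneg ((k+a) - t/2)]
    _ = rexp ((k+a)^2) * rexp (-4⁻¹*t^2) := Real.exp_add _ _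

lemma integrable_of_bound {f : E' → ℝ} (hf : Continuous f) {C a : ℝ} {k : ℕ} (ha : 0 ≤ a)
    (hb : ∀ x, |f x| ≤ C * (1+‖x‖)^k * rexp (a*‖x‖)) : Integrable f (stdGaussian n) := by
  have hC : 0 ≤ C := by
    have := (abs_nonneg (f 0)).trans (hb 0)
    simpa using this
  rw [integrable_stdGaussian_iff]
  set c := (2 * π) ^ (-(n : ℝ) / 2) with hc
  have hcpos : 0 < c := Real.rpow_pos_of_pos (by positivity) _
  refine Integrable.mono (integ4.const_mul (c * C * rexp ((k+a)^2)))
    ((continuous_dens.mul hf).aestronglyMeasurable)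
    (Filter.Eventually.of_forall fun x => ?_)
  have ht : (0:ℝ) ≤ ‖x‖ := norm_nonneg x
  have hd : dens n x = c * rexp (-‖x‖^2/2) := rfl
  rw [Real.norm_eq_abs, Real.norm_eq_abs, abs_mul, abs_of_pos (dens_pos x), hd]
  have h2 : |f x| ≤ C * ((1+‖x‖)^k * rexp (a*‖x‖)) := by
    rw [← mul_assoc]; exact hb x
  calc c * rexp (-‖x‖^2/2) * |f x|
      ≤ c * rexp (-‖x‖^2/2) * (C * ((1+‖x‖)^k * rexp (a*‖x‖))) := by
        apply mul_le_mul_of_nonneg_left h2 (by positivity)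
    _ = (c * C) * ((1+‖x‖)^k * rexp (a*‖x‖) * rexp (-‖x‖^2/2)) := by ring
    _ ≤ (c * C) * (rexp ((k+a)^2) * rexp (-4⁻¹*‖x‖^2)) := by
        apply mul_le_mul_of_nonneg_left (key_bound a k ha ht) (by positivity)
    _ ≤ |c * C * rexp ((k+a)^2) * rexp (-4⁻¹*‖x‖^2)| := by
        rw [abs_of_nonneg (by positivity)]; ring_nf; apply le_refl

lemma integrable_dens : Integrable (dens n) := by
  set c := (2 * π) ^ (-(n : ℝ) / 2) with hc
  have hcpos : 0 < c := Real.rpow_pos_of_pos (by positivity) _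
  refine Integrable.mono (integ4.const_mul c) continuous_dens.aestronglyMeasurable
    (Filter.Eventually.of_forall fun x => ?_)
  rw [Real.norm_eq_abs, Real.norm_eq_abs, abs_of_pos (dens_pos x), abs_of_nonneg (by positivity)]
  apply mul_le_mul_of_nonneg_left _ hcpos.le
  apply Real.exp_le_exp.2
  nlinarith [sq_nonneg ‖x‖]

lemma integral_dens : ∫ x, dens n x = 1 := by
  unfold dens
  rw [integral_const_mul]
  have h2 : (fun x : E' => rexp (-‖x‖^2/2)) = fun x => rexp (-(2⁻¹:ℝ) * ‖x‖^2) :=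
    funext fun x => by ring_nf
  rw [h2, GaussianFourier.integral_rexp_neg_mul_sq_norm (by norm_num), finrank_euclideanSpace_fin]
  have h3 : π/(2⁻¹:ℝ) = 2*π := by ring
  rw [h3, ← Real.rpow_add (by positivity), show (-(n:ℝ)/2 + (n:ℝ)/2) = 0 by ring,
    Real.rpow_zero]

instance : IsProbabilityMeasure (stdGaussian n) := by
  constructor
  rw [stdGaussian_eq, withDensity_apply _ MeasurableSet.univ, setLIntegral_univ]
  have h1 : ∀ x : E', ((dens n x).toNNReal : ℝ≥0∞) = ENNReal.ofReal (dens n x) := fun x => rfl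
  rw [lintegral_congr h1, ← ofReal_integral_eq_lintegral_ofReal integrable_dens
    (Filter.Eventually.of_forall fun x => (dens_pos x).le), integral_dens]
  simp

lemma dens_sub (y v : E') :
    dens n (y - v) = dens n y * rexp (⟪y, v⟫ - ‖v‖^2/2) := by
  unfold dens
  rw [mul_assoc, ← Real.exp_add]
  congr 2
  rw [@norm_sub_sq_real]
  ring

lemma shift (g : E' → ℝ) (v : E') :
    ∫ x, g (x + v) ∂(stdGaussian n)
      = ∫ x, g x * rexp (⟪x, v⟫ - ‖v‖^2/2) ∂(stdGaussian n) := by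
  rw [integral_stdGaussian, integral_stdGaussian]
  calc ∫ x, dens n x * g (x + v)
      = ∫ x, dens n (x + v - v) * g (x + v) := by simp
    _ = ∫ y, dens n (y - v) * g y := integral_add_right_eq_self (fun y => dens n (y - v) * g y) v
    _ = ∫ y, dens n y * (g y * rexp (⟪y, v⟫ - ‖v‖^2/2)) := by
        congr 1; ext y; rw [dens_sub]; ring

lemma one_add_add_le (a b : ℝ) (ha : 0 ≤ a) (hb : 0 ≤ b) :
    1 + (a + b) ≤ (1 + a) * (1 + b) := by nlinarith

lemma stein {g : E' → ℝ} {g' : E' → EuclideanSpace ℝ (Fin n) →L[ℝ] ℝ}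
    (hg : ∀ x, HasFDerivAt g (g' x) x) (hgc : Continuous g) (hg'c : Continuous g')
    {C₁ C₂ : ℝ} {k₁ k₂ : ℕ}
    (hb1 : ∀ x, |g x| ≤ C₁ * (1+‖x‖)^k₁) (hb2 : ∀ x, ‖g' x‖ ≤ C₂ * (1+‖x‖)^k₂) (v : E') :
    ∫ x, g' x v ∂(stdGaussian n) = ∫ x, g x * ⟪x, v⟫ ∂(stdGaussian n) := by
  have hC₁ : 0 ≤ C₁ := le_trans (abs_nonneg _) (by simpa using hb1 0)
  have hC₂ : 0 ≤ C₂ := le_trans (norm_nonneg _) (by simpa using hb2 0)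
  have hginteg : Integrable g (stdGaussian n) := by
    refine integrable_of_bound hgc (le_refl 0) (C := C₁) (k := k₁) (fun x => ?_)
    simpa using hb1 x
  -- the two parametrized integrals
  set F : ℝ → E' → ℝ := fun t x => g (x + t • v) with hF
  set F' : ℝ → E' → ℝ := fun t x => g' (x + t • v) v with hF'
  set G : ℝ → E' → ℝ := fun t x => g x * rexp (t * ⟪x, v⟫ - t^2 * ‖v‖^2 / 2) with hG
  set G' : ℝ → E' → ℝ :=
    fun t x => g x * ((⟪x, v⟫ - t * ‖v‖^2) * rexp (t * ⟪x, v⟫ - t^2 * ‖v‖^2 / 2)) with hG'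
  have hFG : ∀ t, ∫ x, F t x ∂(stdGaussian n) = ∫ x, G t x ∂(stdGaussian n) := by
    intro t
    have := shift g (t • v)
    rw [this]
    congr 1; ext x
    rw [real_inner_smul_right, norm_smul, Real.norm_eq_abs, mul_pow, sq_abs]
    try simp only [hG]
    try ring_nf
  have hcont_inner : Continuous (fun x : E' => ⟪x, v⟫) :=
    Continuous.inner continuous_id continuous_const
  -- derivative of F-integral
  have hball : ∀ t : ℝ, t ∈ Metric.ball (0:ℝ) 1 → |t| ≤ 1 := fun t ht => by
    have := Metric.mem_ball.1 ht
    rw [Real.dist_eq, sub_zero] at this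
    exact this.le
  have hnorm_add : ∀ (t : ℝ) (x : E'), |t| ≤ 1 → ‖x + t • v‖ ≤ ‖x‖ + ‖v‖ := by
    intro t x ht
    calc ‖x + t • v‖ ≤ ‖x‖ + ‖t • v‖ := norm_add_le _ _
      _ = ‖x‖ + |t| * ‖v‖ := by rw [norm_smul, Real.norm_eq_abs]
      _ ≤ ‖x‖ + 1 * ‖v‖ := by
          have := mul_le_mul_of_nonneg_right ht (norm_nonneg v)
          linarith
      _ = ‖x‖ + ‖v‖ := by ring
  have hpow : ∀ x : E', ((1:ℝ) + (‖x‖ + ‖v‖))^k₂ ≤ (1+‖v‖)^k₂ * (1+‖x‖)^k₂ := by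
    intro x
    rw [← mul_pow]
    apply pow_le_pow_left₀ (by positivity)
    nlinarith [norm_nonneg x, norm_nonneg v]
  have hbound1 : ∀ᵐ x ∂(stdGaussian n), ∀ t ∈ Metric.ball (0:ℝ) 1,
      ‖F' t x‖ ≤ C₂ * (1+‖v‖)^k₂ * ‖v‖ * (1+‖x‖)^k₂ := by
    refine Filter.Eventually.of_forall fun x t ht => ?_
    simp only [hF', Real.norm_eq_abs]
    calc |g' (x + t • v) v| ≤ ‖g' (x + t • v)‖ * ‖v‖ := (g' _).le_opNorm v
      _ ≤ (C₂ * (1+‖x + t • v‖)^k₂) * ‖v‖ :=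
          mul_le_mul_of_nonneg_right (hb2 _) (norm_nonneg v)
      _ ≤ (C₂ * ((1+‖v‖)^k₂ * (1+‖x‖)^k₂)) * ‖v‖ := by
          have h1 : (1+‖x + t • v‖ : ℝ)^k₂ ≤ (1 + (‖x‖ + ‖v‖))^k₂ := by
            apply pow_le_pow_left₀ (by positivity)
            linarith [hnorm_add t x (hball t ht)]
          have h2 := h1.trans (hpow x)
          have := mul_le_mul_of_nonneg_left h2 hC₂
          exact mul_le_mul_of_nonneg_right this (norm_nonneg v)
      _ = C₂ * (1+‖v‖)^k₂ * ‖v‖ * (1+‖x‖)^k₂ := by ring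
  have hbint1 : Integrable (fun x : E' => C₂ * (1+‖v‖)^k₂ * ‖v‖ * (1+‖x‖)^k₂)
      (stdGaussian n) := by
    refine integrable_of_bound
      (continuous_const.mul ((continuous_const.add continuous_norm).pow _)) (le_refl 0)
      (C := C₂ * (1+‖v‖)^k₂ * ‖v‖) (k := k₂) (fun x => ?_)
    rw [abs_of_nonneg (by positivity)]
    simp
  have hdiff1 : ∀ᵐ x ∂(stdGaussian n), ∀ t ∈ Metric.ball (0:ℝ) 1,
      HasDerivAt (fun s => F s x) (F' t x) t := by
    refine Filter.Eventually.of_forall fun x t _ => ?_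
    have hline : HasDerivAt (fun s : ℝ => x + s • v) v t := by
      simpa using ((hasDerivAt_id t).smul_const v).const_add x
    exact (hg (x + t • v)).comp_hasDerivAt t hline
  have hDF := (hasDerivAt_integral_of_dominated_loc_of_deriv_le (μ := stdGaussian n)
      (F := F) (F' := F') (x₀ := 0)
      (bound := fun x => C₂ * (1+‖v‖)^k₂ * ‖v‖ * (1+‖x‖)^k₂) (Metric.ball_mem_nhds 0 one_pos)
      (Filter.Eventually.of_forall fun t =>
        (hgc.comp (continuous_id.add continuous_const)).aestronglyMeasurable)
      (by simpa [hF] using hginteg)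
      (((ContinuousLinearMap.apply ℝ ℝ v).continuous.comp
        (hg'c.comp (continuous_id.add continuous_const))).aestronglyMeasurable)
      hbound1 hbint1 hdiff1).2
  -- derivative of G-integral
  have habs_inner : ∀ x : E', |⟪x, v⟫| ≤ ‖x‖ * ‖v‖ := fun x => abs_real_inner_le_norm x v
  have hbound2 : ∀ᵐ x ∂(stdGaussian n), ∀ t ∈ Metric.ball (0:ℝ) 1,
      ‖G' t x‖ ≤ C₁ * (‖v‖ + ‖v‖^2) * (1+‖x‖)^(k₁+1) * rexp (‖v‖ * ‖x‖) := by
    refine Filter.Eventually.of_forall fun x t ht => ?_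
    have ht1 : |t| ≤ 1 := hball t ht
    have hx := norm_nonneg x; have hv := norm_nonneg v
    have hexp : rexp (t * ⟪x, v⟫ - t^2 * ‖v‖^2 / 2) ≤ rexp (‖v‖ * ‖x‖) := by
      apply Real.exp_le_exp.2
      have h1 : t * ⟪x, v⟫ ≤ |t * ⟪x, v⟫| := le_abs_self _
      have h2 : |t * ⟪x, v⟫| = |t| * |⟪x, v⟫| := abs_mul _ _
      have h3 : |t| * |⟪x, v⟫| ≤ 1 * (‖x‖ * ‖v‖) :=
        mul_le_mul ht1 (habs_inner x) (abs_nonneg _) one_pos.le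
      nlinarith [sq_nonneg t, sq_nonneg ‖v‖, sq_nonneg (t*‖v‖)]
    have hfac : |⟪x, v⟫ - t * ‖v‖^2| ≤ ‖x‖ * ‖v‖ + ‖v‖^2 := by
      calc |⟪x, v⟫ - t * ‖v‖^2| ≤ |⟪x, v⟫| + |t * ‖v‖^2| := abs_sub _ _
        _ ≤ ‖x‖ * ‖v‖ + |t| * ‖v‖^2 := by
            rw [abs_mul, abs_of_nonneg (sq_nonneg ‖v‖)]
            exact add_le_add (habs_inner x) le_rfl
        _ ≤ ‖x‖ * ‖v‖ + 1 * ‖v‖^2 := by nlinarith [sq_nonneg ‖v‖]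
        _ = ‖x‖ * ‖v‖ + ‖v‖^2 := by ring
    simp only [hG', Real.norm_eq_abs]
    rw [abs_mul, abs_mul, Real.abs_exp]
    calc |g x| * (|⟪x, v⟫ - t * ‖v‖^2| * rexp (t * ⟪x, v⟫ - t^2 * ‖v‖^2 / 2))
        ≤ (C₁ * (1+‖x‖)^k₁) * ((‖x‖ * ‖v‖ + ‖v‖^2) * rexp (‖v‖ * ‖x‖)) := by
          apply mul_le_mul (hb1 x) _ (by positivity) (by positivity)
          apply mul_le_mul hfac hexp (Real.exp_pos _).le (by positivity)
      _ ≤ C₁ * (‖v‖ + ‖v‖^2) * (1+‖x‖)^(k₁+1) * rexp (‖v‖ * ‖x‖) := by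
          have h4 : (‖x‖ * ‖v‖ + ‖v‖^2) ≤ (‖v‖ + ‖v‖^2) * (1+‖x‖) := by nlinarith
          have h5 : (1+‖x‖:ℝ)^k₁ * (1+‖x‖) = (1+‖x‖)^(k₁+1) := by rw [pow_succ]
          calc (C₁ * (1+‖x‖)^k₁) * ((‖x‖ * ‖v‖ + ‖v‖^2) * rexp (‖v‖ * ‖x‖))
              ≤ (C₁ * (1+‖x‖)^k₁) * (((‖v‖ + ‖v‖^2) * (1+‖x‖)) * rexp (‖v‖ * ‖x‖)) := by
                apply mul_le_mul_of_nonneg_left _ (by positivity)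
                exact mul_le_mul_of_nonneg_right h4 (Real.exp_pos _).le
            _ = C₁ * (‖v‖ + ‖v‖^2) * ((1+‖x‖)^k₁ * (1+‖x‖)) * rexp (‖v‖ * ‖x‖) := by ring
            _ = C₁ * (‖v‖ + ‖v‖^2) * (1+‖x‖)^(k₁+1) * rexp (‖v‖ * ‖x‖) := by rw [h5]
  have hbint2 : Integrable
      (fun x : E' => C₁ * (‖v‖ + ‖v‖^2) * (1+‖x‖)^(k₁+1) * rexp (‖v‖ * ‖x‖))
      (stdGaussian n) := by
    refine integrable_of_bound
      ((continuous_const.mul ((continuous_const.add continuous_norm).pow _)).mul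
        (Real.continuous_exp.comp (continuous_const.mul continuous_norm)))
      (norm_nonneg v) (C := C₁ * (‖v‖ + ‖v‖^2)) (k := k₁+1) (fun x => ?_)
    rw [abs_of_nonneg (by positivity)]
    try (apply le_of_eq; ring)
  have hG0int : Integrable (G 0) (stdGaussian n) := by
    have : G 0 = g := by ext x; simp [hG]
    rw [this]; exact hginteg
  have hG'meas : AEStronglyMeasurable (G' 0) (stdGaussian n) := by
    apply Continuous.aestronglyMeasurable
    apply hgc.mul
    apply Continuous.mul (hcont_inner.sub continuous_const)
    exact Real.continuous_exp.comp
      ((continuous_const.mul hcont_inner).sub continuous_const)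
  have hdiff2 : ∀ᵐ x ∂(stdGaussian n), ∀ t ∈ Metric.ball (0:ℝ) 1,
      HasDerivAt (fun s => G s x) (G' t x) t := by
    refine Filter.Eventually.of_forall fun x t _ => ?_
    have h1 : HasDerivAt (fun s : ℝ => s * ⟪x, v⟫ - s^2 * ‖v‖^2 / 2)
        (⟪x, v⟫ - t * ‖v‖^2) t := by
      have ha : HasDerivAt (fun s : ℝ => s * ⟪x, v⟫) ⟪x, v⟫ t := hasDerivAt_mul_const _
      have hb' : HasDerivAt (fun s : ℝ => s^2 * ‖v‖^2 / 2) (t * ‖v‖^2) t := by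
        have := ((hasDerivAt_pow 2 t).mul_const (‖v‖^2)).div_const 2
        refine this.congr_deriv ?_
        norm_num
        ring
      exact ha.sub hb'
    have h2 := (h1.exp).const_mul (g x)
    refine h2.congr_deriv ?_
    simp only [hG']
    ring
  have hDG := (hasDerivAt_integral_of_dominated_loc_of_deriv_le (μ := stdGaussian n)
      (F := G) (F' := G') (x₀ := 0)
      (bound := fun x => C₁ * (‖v‖ + ‖v‖^2) * (1+‖x‖)^(k₁+1) * rexp (‖v‖ * ‖x‖)) (Metric.ball_mem_nhds 0 one_pos)
      (Filter.Eventually.of_forall fun t => by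
        apply Continuous.aestronglyMeasurable
        exact hgc.mul (Real.continuous_exp.comp
          ((continuous_const.mul hcont_inner).sub
            ((continuous_const.mul continuous_const) : Continuous fun _ : E' => t^2*‖v‖^2/2))))
      hG0int hG'meas hbound2 hbint2 hdiff2).2
  -- identify the two derivatives
  have hFeqG : (fun t => ∫ x, F t x ∂(stdGaussian n))
      = (fun t => ∫ x, G t x ∂(stdGaussian n)) := funext hFG
  rw [hFeqG] at hDF
  have := hDF.unique hDG
  have hL : ∫ x, F' 0 x ∂(stdGaussian n) = ∫ x, g' x v ∂(stdGaussian n) := by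
    congr 1; ext x; simp [hF']
  have hR : ∫ x, G' 0 x ∂(stdGaussian n) = ∫ x, g x * ⟪x, v⟫ ∂(stdGaussian n) := by
    congr 1; ext x; simp [hG']
  rw [← hL, this, hR]

lemma integral_inner_zero (v : E') : ∫ x, ⟪x, v⟫ ∂(stdGaussian n) = 0 := by
  have h := stein (g := fun _ : E' => (1:ℝ)) (g' := fun _ => 0)
    (fun x => hasFDerivAt_const 1 x) continuous_const continuous_const
    (C₁ := 1) (C₂ := 1) (k₁ := 0) (k₂ := 0)
    (fun x => by norm_num) (fun x => by simp) v
  simp only [ContinuousLinearMap.zero_apply, integral_zero, one_mul] at h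
  exact h.symm

lemma integral_inner_sq (v : E') : ∫ x, ⟪x, v⟫^2 ∂(stdGaussian n) = ‖v‖^2 := by
  have h := stein (g := fun x : E' => ⟪v, x⟫) (g' := fun _ => innerSL ℝ v)
    (fun x => (innerSL ℝ v).hasFDerivAt) (innerSL ℝ v).continuous continuous_const
    (C₁ := ‖v‖ + 1) (C₂ := ‖v‖ + 1) (k₁ := 1) (k₂ := 0)
    (fun x => by
      have := abs_real_inner_le_norm v x
      have hx := norm_nonneg x; have hv := norm_nonneg v
      nlinarith)
    (fun x => by
      rw [pow_zero, mul_one]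
      calc ‖innerSL ℝ v‖ ≤ ‖v‖ := (innerSL_apply_norm (𝕜 := ℝ) v).le
        _ ≤ ‖v‖ + 1 := by linarith) v
  have h1 : ∫ x, (innerSL ℝ v : E' →L[ℝ] ℝ) v ∂(stdGaussian n) = ‖v‖^2 := by
    rw [integral_const, probReal_univ]
    simp only [ENNReal.toReal_one, one_smul, innerSL_apply_apply]
    exact real_inner_self_eq_norm_sq v
  rw [h1] at h
  rw [h]
  congr 1; ext x
  rw [sq, real_inner_comm]

lemma cauchy_schwarz {α : Type*} [MeasurableSpace α] {μ : Measure α} {f g : α → ℝ}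
    (hf2 : Integrable (fun x => f x ^ 2) μ) (hg2 : Integrable (fun x => g x ^ 2) μ)
    (hfg : Integrable (fun x => f x * g x) μ) :
    (∫ x, f x * g x ∂μ)^2 ≤ (∫ x, f x ^ 2 ∂μ) * (∫ x, g x ^ 2 ∂μ) := by
  set A := ∫ x, f x ^ 2 ∂μ with hA
  set B := ∫ x, f x * g x ∂μ with hB
  set D := ∫ x, g x ^ 2 ∂μ with hD
  have hA0 : 0 ≤ A := integral_nonneg fun x => sq_nonneg _
  have hD0 : 0 ≤ D := integral_nonneg fun x => sq_nonneg _
  rcases eq_or_lt_of_le hD0 with hDeq | hDpos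
  · -- D = 0 : then g = 0 a.e., so B = 0
    have hg02 : (fun x => g x ^ 2) =ᵐ[μ] 0 := by
      rw [← integral_eq_zero_iff_of_nonneg (fun x => sq_nonneg (g x)) hg2]
      exact hDeq.symm
    have hg0 : g =ᵐ[μ] 0 := by
      filter_upwards [hg02] with x hx
      have : g x ^ 2 = 0 := hx
      exact pow_eq_zero_iff (by norm_num) |>.1 this
    have hB0 : B = 0 := by
      have hfg0 : (fun x => f x * g x) =ᵐ[μ] 0 := by
        filter_upwards [hg0] with x hx
        simp only [Pi.zero_apply] at hx ⊢
        rw [hx, mul_zero]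
      rw [hB, integral_congr_ae hfg0]
      simp
    nlinarith
  · -- D > 0
    have hnn : 0 ≤ ∫ x, (D * f x - B * g x)^2 ∂μ := integral_nonneg fun x => sq_nonneg _
    have hexp : ∀ x, (D * f x - B * g x)^2
        = D^2 * f x^2 - 2*D*B * (f x * g x) + B^2 * g x^2 := fun x => by ring
    have hint : ∫ x, (D * f x - B * g x)^2 ∂μ = D^2 * A - 2*D*B*B + B^2 * D := by
      rw [integral_congr_ae (Filter.Eventually.of_forall hexp)]
      rw [integral_add, integral_sub]
      · rw [integral_const_mul, integral_const_mul, integral_const_mul]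
      · exact hf2.const_mul _
      · exact hfg.const_mul _
      · exact (hf2.const_mul _).sub (hfg.const_mul _)
      · exact hg2.const_mul _
    rw [hint] at hnn
    have : 0 ≤ D * (D * A - B^2) := by nlinarith
    nlinarith

lemma integrable_of_polybound {f : E' → ℝ} (hf : Continuous f) {C : ℝ} {k : ℕ}
    (hb : ∀ x, |f x| ≤ C * (1+‖x‖)^k) : Integrable f (stdGaussian n) :=
  integrable_of_bound (C := C) (k := k) (a := 0) hf le_rfl fun x => by
    rw [zero_mul, Real.exp_zero, mul_one]; exact hb x

lemma pow_one_add_le (t : ℝ) (ht : 0 ≤ t) {j k : ℕ} (hjk : j ≤ k) :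
    (1+t)^j ≤ (1+t)^k := pow_le_pow_right₀ (by linarith) hjk

end StdGaussAux

set_option maxHeartbeats 1000000 in
open StdGaussAux in
theorem stmt_8 (n : ℕ) (m : Measure (EuclideanSpace ℝ (Fin n)))
    [IsFiniteMeasure m] (hm : m ≠ 0)
    (hmoment : Integrable (fun y => ‖y‖ ^ 2) m)
    (φ : EuclideanSpace ℝ (Fin n) → ℝ)
    (hφ : ContDiff ℝ 2 φ)
    (hgrad : PolyGrowth (fun x => gradient φ x))
    (hhess : PolyGrowth (fun x => fderiv ℝ (gradient φ) x))
    (hT : (stdGaussian n).map (fun x => x + gradient φ x)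
        = (m Set.univ)⁻¹ • m) :
    ∀ h : EuclideanSpace ℝ (Fin n),
      (1 / (2 * (m Set.univ).toReal)) *
          ((∫ y, (⟪y, h⟫ ^ 2 - ‖h‖ ^ 2) ∂m)
            - (1 / (m Set.univ).toReal) * (∫ y, ⟪y, h⟫ ∂m) ^ 2)
        ≥ ∫ x, ⟪fderiv ℝ (gradient φ) x h, h⟫ ∂(stdGaussian n) := by
  intro h
  set M := (m Set.univ).toReal with hM
  have hMpos : 0 < M :=
    ENNReal.toReal_pos (fun h0 => hm (Measure.measure_univ_eq_zero.1 h0)) (measure_ne_top m _)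
  have hgrad_cd : ContDiff ℝ 1 (gradient φ) :=
    ((InnerProductSpace.toDual ℝ _).symm.toContinuousLinearEquiv.contDiff).comp
      (hφ.fderiv_right (by norm_num))
  have hgradc : Continuous (gradient φ) := hgrad_cd.continuous
  set T : EuclideanSpace ℝ (Fin n) → EuclideanSpace ℝ (Fin n) :=
    fun x => x + gradient φ x with hTdef
  have hTc : Continuous T := continuous_id.add hgradc
  have hHessc : Continuous (fderiv ℝ (gradient φ)) := (contDiff_one_iff_fderiv.1 hgrad_cd).2
  have hgdiff : ∀ x, HasFDerivAt (gradient φ) (fderiv ℝ (gradient φ) x) x :=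
    fun x => (hgrad_cd.differentiable (by norm_num) x).hasFDerivAt
  obtain ⟨Cg, hCg, kg, hgb⟩ := hgrad
  obtain ⟨Ch, hCh, kh, hhb⟩ := hhess
  by_cases hh : h = 0
  · subst hh
    simp [inner_zero_right, norm_zero]
  have hnh : 0 < ‖h‖ := norm_pos_iff.2 hh
  -- basic functions
  set w : EuclideanSpace ℝ (Fin n) → ℝ := fun x => ⟪x, h⟫ with hw
  set u : EuclideanSpace ℝ (Fin n) → ℝ := fun x => ⟪T x, h⟫ with hu
  have hcw : Continuous w := Continuous.inner continuous_id continuous_const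
  have hcu : Continuous u := Continuous.inner hTc continuous_const
  -- norm bound on T
  have hTb : ∀ x, ‖T x‖ ≤ (1+Cg) * (1+‖x‖)^(kg+1) := by
    intro x
    have h1 : ‖T x‖ ≤ ‖x‖ + ‖gradient φ x‖ := norm_add_le _ _
    have h2 := hgb x
    have h3 : ‖x‖ ≤ (1+‖x‖)^(kg+1) := by
      calc ‖x‖ ≤ 1 + ‖x‖ := by linarith
        _ = (1+‖x‖)^1 := (pow_one _).symm
        _ ≤ (1+‖x‖)^(kg+1) := pow_one_add_le _ (norm_nonneg x) (by omega)
    have h4 : (1+‖x‖:ℝ)^kg ≤ (1+‖x‖)^(kg+1) := pow_one_add_le _ (norm_nonneg x) (by omega)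
    nlinarith [norm_nonneg (gradient φ x)]
  -- integrability of the various integrands w.r.t. the Gaussian
  have Iw : Integrable w (stdGaussian n) := by
    refine integrable_of_polybound hcw (C := ‖h‖) (k := 1) fun x => ?_
    have := abs_real_inner_le_norm x h
    have := norm_nonneg x
    nlinarith
  have Iw2 : Integrable (fun x => w x^2) (stdGaussian n) := by
    refine integrable_of_polybound (hcw.pow 2) (C := ‖h‖^2) (k := 2) fun x => ?_
    have h1 := abs_real_inner_le_norm x h
    have h2 := norm_nonneg x
    rw [abs_of_nonneg (sq_nonneg _)]
    have h3 : |w x| ^ 2 ≤ (‖x‖*‖h‖)^2 := by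
      apply pow_le_pow_left₀ (abs_nonneg _) h1
    rw [← sq_abs]
    nlinarith
  have Iu : Integrable u (stdGaussian n) := by
    refine integrable_of_polybound hcu (C := ‖h‖*(1+Cg)) (k := kg+1) fun x => ?_
    have h1 := abs_real_inner_le_norm (T x) h
    have h2 := hTb x
    have h3 : (0:ℝ) < (1+‖x‖)^(kg+1) := by positivity
    nlinarith [norm_nonneg (T x)]
  have Iu2 : Integrable (fun x => u x^2) (stdGaussian n) := by
    refine integrable_of_polybound (hcu.pow 2) (C := (‖h‖*(1+Cg))^2) (k := (kg+1)*2)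
      fun x => ?_
    have h1 := abs_real_inner_le_norm (T x) h
    have h2 := hTb x
    rw [abs_of_nonneg (sq_nonneg _), pow_mul, ← sq_abs]
    have h4 : |u x| ≤ (‖h‖*(1+Cg)) * (1+‖x‖)^(kg+1) := by
      have h3 : (0:ℝ) < (1+‖x‖)^(kg+1) := by positivity
      nlinarith [norm_nonneg (T x)]
    calc |u x|^2 ≤ ((‖h‖*(1+Cg)) * (1+‖x‖)^(kg+1))^2 :=
          pow_le_pow_left₀ (abs_nonneg _) h4 2
      _ = (‖h‖*(1+Cg))^2 * ((1+‖x‖)^(kg+1))^2 := by ring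
  have Iuw : Integrable (fun x => u x * w x) (stdGaussian n) := by
    refine integrable_of_polybound (hcu.mul hcw) (C := ‖h‖^2*(1+Cg)) (k := kg+2)
      fun x => ?_
    have h1 := abs_real_inner_le_norm (T x) h
    have h2 := abs_real_inner_le_norm x h
    have h3 := hTb x
    have h4 : (0:ℝ) < (1+‖x‖)^(kg+1) := by positivity
    rw [abs_mul]
    have h5 : |u x| ≤ (‖h‖*(1+Cg)) * (1+‖x‖)^(kg+1) := by nlinarith [norm_nonneg (T x)]
    have h6 : |w x| ≤ ‖h‖ * (1+‖x‖) := by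
      have := norm_nonneg x; nlinarith
    calc |u x| * |w x| ≤ ((‖h‖*(1+Cg)) * (1+‖x‖)^(kg+1)) * (‖h‖ * (1+‖x‖)) := by
          apply mul_le_mul h5 h6 (abs_nonneg _) (by positivity)
      _ = ‖h‖^2*(1+Cg) * ((1+‖x‖)^(kg+1) * (1+‖x‖)^1) := by ring
      _ = ‖h‖^2*(1+Cg) * (1+‖x‖)^(kg+2) := by rw [← pow_add]
  -- Stein's lemma applied to x ↦ ⟪h, ∇φ x⟫
  set gS : EuclideanSpace ℝ (Fin n) → ℝ := fun x => (innerSL ℝ h) (gradient φ x) with hgS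
  set gS' : EuclideanSpace ℝ (Fin n) → EuclideanSpace ℝ (Fin n) →L[ℝ] ℝ :=
    fun x => (innerSL ℝ h).comp (fderiv ℝ (gradient φ) x) with hgS'
  have hcgS : Continuous gS := (innerSL ℝ h).continuous.comp hgradc
  have hcgS' : Continuous gS' :=
    ((ContinuousLinearMap.compL ℝ (EuclideanSpace ℝ (Fin n)) (EuclideanSpace ℝ (Fin n)) ℝ
      (innerSL ℝ h)).continuous).comp hHessc
  have hgSd : ∀ x, HasFDerivAt gS (gS' x) x :=
    fun x => ((innerSL ℝ h).hasFDerivAt).comp x (hgdiff x)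
  have hgSb : ∀ x, |gS x| ≤ (Cg*‖h‖) * (1+‖x‖)^kg := by
    intro x
    have h1 := abs_real_inner_le_norm h (gradient φ x)
    have h2 := hgb x
    have h3 : (0:ℝ) < (1+‖x‖)^kg := by positivity
    simp only [hgS, innerSL_apply_apply]
    nlinarith [norm_nonneg (gradient φ x), norm_nonneg h]
  have hgS'b : ∀ x, ‖gS' x‖ ≤ (Ch*‖h‖) * (1+‖x‖)^kh := by
    intro x
    have h1 : ‖gS' x‖ ≤ ‖innerSL ℝ h‖ * ‖fderiv ℝ (gradient φ) x‖ :=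
      ContinuousLinearMap.opNorm_comp_le _ _
    have h2 : ‖innerSL ℝ h‖ = ‖h‖ := innerSL_apply_norm (𝕜 := ℝ) h
    have h3 := hhb x
    have h4 : (0:ℝ) < (1+‖x‖)^kh := by positivity
    rw [h2] at h1
    nlinarith [norm_nonneg (fderiv ℝ (gradient φ) x), norm_nonneg h]
  have hstein := stein hgSd hcgS hcgS' hgSb hgS'b h
  -- integrability of gS * w
  have IgSw : Integrable (fun x => gS x * w x) (stdGaussian n) := by
    refine integrable_of_polybound (hcgS.mul hcw) (C := Cg*‖h‖^2) (k := kg+1) fun x => ?_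
    have h2 := abs_real_inner_le_norm x h
    have h5 := hgSb x
    have h6 : |w x| ≤ ‖h‖ * (1+‖x‖) := by
      have := norm_nonneg x; nlinarith
    rw [abs_mul]
    calc |gS x| * |w x| ≤ ((Cg*‖h‖) * (1+‖x‖)^kg) * (‖h‖ * (1+‖x‖)) := by
          exact mul_le_mul h5 h6 (abs_nonneg _)
            (mul_nonneg (mul_nonneg hCg.le (norm_nonneg h)) (by positivity))
      _ = Cg*‖h‖^2 * ((1+‖x‖)^kg * (1+‖x‖)^1) := by ring
      _ = Cg*‖h‖^2 * (1+‖x‖)^(kg+1) := by rw [← pow_add]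
  -- the key value: E0
  set E0 : ℝ := ∫ x, ⟪fderiv ℝ (gradient φ) x h, h⟫ ∂(stdGaussian n) with hE0
  have hE0' : ∫ x, gS x * w x ∂(stdGaussian n) = E0 := by
    rw [← hstein, hE0]
    congr 1; ext x
    simp only [hgS', ContinuousLinearMap.comp_apply, innerSL_apply_apply]
    exact (real_inner_comm _ _).symm
  -- moments of w
  have hw0 : ∫ x, w x ∂(stdGaussian n) = 0 := integral_inner_zero h
  have hw2 : ∫ x, w x^2 ∂(stdGaussian n) = ‖h‖^2 := integral_inner_sq h
  -- ∫ u w = ‖h‖² + E0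
  have huwsplit : ∀ x, u x * w x = w x^2 + gS x * w x := by
    intro x
    simp only [hu, hw, hgS, hTdef, innerSL_apply_apply]
    rw [inner_add_left, real_inner_comm h (gradient φ x)]
    ring
  have huw : ∫ x, u x * w x ∂(stdGaussian n) = ‖h‖^2 + E0 := by
    rw [integral_congr_ae (Filter.Eventually.of_forall huwsplit), integral_add Iw2 IgSw,
      hw2, hE0']
  -- transfer of m-integrals
  have hmap : ∀ f : EuclideanSpace ℝ (Fin n) → ℝ, Continuous f →
      ∫ y, f y ∂m = M * ∫ x, f (T x) ∂(stdGaussian n) := by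
    intro f hf
    have h1 : ∫ y, f y ∂((m Set.univ)⁻¹ • m) = ∫ x, f (T x) ∂(stdGaussian n) := by
      rw [← hT]
      exact integral_map hTc.aemeasurable hf.aestronglyMeasurable
    rw [integral_smul_measure, ENNReal.toReal_inv, smul_eq_mul] at h1
    calc ∫ y, f y ∂m = M * (M⁻¹ * ∫ y, f y ∂m) := by
          field_simp
      _ = M * ∫ x, f (T x) ∂(stdGaussian n) := by rw [h1]
  set I1 : ℝ := ∫ x, u x ∂(stdGaussian n) with hI1
  set I2 : ℝ := ∫ x, u x^2 ∂(stdGaussian n) with hI2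
  have hml : ∫ y, ⟪y, h⟫ ∂m = M * I1 :=
    hmap (fun y => ⟪y, h⟫) (Continuous.inner continuous_id continuous_const)
  have hm2l : ∫ y, ⟪y, h⟫^2 ∂m = M * I2 :=
    hmap (fun y => ⟪y, h⟫^2) ((Continuous.inner continuous_id continuous_const).pow 2)
  -- m-integrability
  have hm2int : Integrable (fun y => ⟪y, h⟫^2) m := by
    refine Integrable.mono (hmoment.const_mul (‖h‖^2))
      ((Continuous.inner continuous_id continuous_const).pow 2).aestronglyMeasurable
      (Filter.Eventually.of_forall fun y => ?_)
    have h1 := abs_real_inner_le_norm y h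
    have h2 := norm_nonneg y; have h3 := norm_nonneg h
    rw [Real.norm_eq_abs, Real.norm_eq_abs, abs_of_nonneg (sq_nonneg _), ← sq_abs]
    rw [abs_of_nonneg (by positivity : (0:ℝ) ≤ ‖h‖^2 * ‖y‖^2)]
    calc |⟪y, h⟫|^2 ≤ (‖y‖*‖h‖)^2 := pow_le_pow_left₀ (abs_nonneg _) h1 2
      _ = ‖h‖^2*‖y‖^2 := by ring
  -- split the m-integral
  have hsub : ∫ y, (⟪y, h⟫^2 - ‖h‖^2) ∂m = M * I2 - M * ‖h‖^2 := by
    rw [integral_sub hm2int (integrable_const _), integral_const, hm2l, measureReal_def, ← hM, smul_eq_mul]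
  -- Cauchy-Schwarz
  have hfr : Integrable (fun x => (u x - I1)^2) (stdGaussian n) := by
    have : (fun x => (u x - I1)^2) = fun x => u x^2 - (2*I1)*u x + I1^2 :=
      funext fun x => by ring
    rw [this]
    exact (Iu2.sub (Iu.const_mul _)).add (integrable_const _)
  have hfgr : Integrable (fun x => (u x - I1) * w x) (stdGaussian n) := by
    have : (fun x => (u x - I1) * w x) = fun x => u x * w x - I1 * w x :=
      funext fun x => by ring
    rw [this]
    exact Iuw.sub (Iw.const_mul _)
  have hCS := cauchy_schwarz hfr Iw2 hfgr
  have hfgval : ∫ x, (u x - I1) * w x ∂(stdGaussian n) = ‖h‖^2 + E0 := by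
    have : (fun x => (u x - I1) * w x) = fun x => u x * w x - I1 * w x :=
      funext fun x => by ring
    rw [this, integral_sub Iuw (Iw.const_mul _), huw, integral_const_mul, hw0]
    ring
  have hf2val : ∫ x, (u x - I1)^2 ∂(stdGaussian n) = I2 - I1^2 := by
    have : (fun x => (u x - I1)^2) = fun x => u x^2 - (2*I1)*u x + I1^2 :=
      funext fun x => by ring
    have Ia : Integrable (fun x => u x^2 - (2*I1)*u x) (stdGaussian n) :=
      Iu2.sub (Iu.const_mul _)
    rw [this, integral_add Ia (integrable_const _),
      integral_sub Iu2 (Iu.const_mul _), integral_const_mul, integral_const, probReal_univ]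
    simp only [ENNReal.toReal_one, one_smul]
    rw [← hI1, ← hI2]
    ring
  rw [hfgval, hf2val, hw2] at hCS
  -- final arithmetic
  rw [hml, hsub]
  have hM0 : M ≠ 0 := ne_of_gt hMpos
  have heq : (1 / (2 * M)) * ((M * I2 - M * ‖h‖^2) - (1/M) * (M*I1)^2)
      = (I2 - ‖h‖^2 - I1^2)/2 := by
    field_simp
  rw [heq]
  have hh2 : 0 < ‖h‖^2 := by positivity
  nlinarith [hCS, sq_nonneg E0, hh2]
end
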